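/- arXiv:2512.24904 — 3 statements merged into one kernel-verified Lean document; each statement's English description precedes it below -/
import Mathlib

section
/- Let X be a compact metric space and f : X → X a homeomorphism. Then f is cw-expansive if and only if f^k is cw-expansive for all nonzero integers k, and this is also equivalent to f^{i₀} being cw-expansive for a single nonzero integer i₀. -/
/-- Continuum-wise expansiveness of a self-homeomorphism, via its underlying bijection. -/
def CWExpansive {X : Type*} [MetricSpace X] (g : Equiv.Perm X) : Prop :=
  ∃ c > (0 : ℝ), ∀ A : Set X, IsCompact A → IsConnected A →
    (∀ n : ℤ, Metric.diam (⇑(g ^ n) '' A) ≤ c) → A.Subsingleton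

/-!
The iterates of `f^k` are among those of `f`, which gives one direction. Conversely, write
`m = r + k q` with `0 ≤ r < |k|`. If every `f^(kq)(A)` has diameter below a common modulus of
uniform continuity of the finitely many maps `f^r` (they are uniformly continuous on the compact
space), then every `f^m(A) = f^r(f^(kq)(A))` has diameter at most the cw-expansivity constant of `f`.
-/

open Bornology Metric

namespace Homeomorph

variable {X : Type*} [TopologicalSpace X]

def toPerm : (X ≃ₜ X) →* Equiv.Perm X where
  toFun := toEquiv
  map_one' := rfl
  map_mul' _ _ := rfl

theorem continuous_toEquiv_zpow (f : X ≃ₜ X) (n : ℤ) :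
    Continuous ⇑((f.toEquiv : Equiv.Perm X) ^ n) := by
  have h : ⇑(toPerm (f ^ n)) = ⇑((f.toEquiv : Equiv.Perm X) ^ n) := by
    rw [map_zpow]
    rfl
  exact h ▸ (f ^ n).continuous

end Homeomorph

theorem UniformEquicontinuous.exists_forall_diam_image_le {ι α β : Type*} [PseudoMetricSpace α]
    [PseudoMetricSpace β] {F : ι → α → β} (hF : UniformEquicontinuous F) {ε : ℝ} (hε : 0 < ε) :
    ∃ δ > 0, ∀ s : Set α, IsBounded s → diam s < δ → ∀ i, diam (F i '' s) ≤ ε := by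
  obtain ⟨δ, hδ, hF⟩ := uniformEquicontinuous_iff.mp hF ε hε
  refine ⟨δ, hδ, fun s hs hsδ i => diam_le_of_forall_dist_le hε.le ?_⟩
  rintro _ ⟨x, hx, rfl⟩ _ ⟨y, hy, rfl⟩
  exact (hF x y ((dist_le_diam_of_mem hs hx hy).trans_lt hsδ) i).le

namespace CWExpansive

variable {X : Type*} [MetricSpace X] {g : Equiv.Perm X}

theorem of_zpow {k : ℤ} (h : CWExpansive (g ^ k)) : CWExpansive g := by
  obtain ⟨c, hc, h⟩ := h
  refine ⟨c, hc, fun A hA hconn hdiam => h A hA hconn fun n => ?_⟩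
  rw [← zpow_mul]
  exact hdiam (k * n)

theorem zpow (h : CWExpansive g) (huc : ∀ n : ℤ, UniformContinuous ⇑(g ^ n)) {k : ℤ}
    (hk : k ≠ 0) : CWExpansive (g ^ k) := by
  obtain ⟨c, hc, h⟩ := h
  let F : Set.Ico 0 (k.natAbs : ℤ) → X → X := fun r => ⇑(g ^ (r : ℤ))
  have hF : UniformEquicontinuous F := uniformEquicontinuous_finite.mpr fun r => huc r
  obtain ⟨δ, hδ, hFδ⟩ := hF.exists_forall_diam_image_le hc
  refine ⟨δ / 2, half_pos hδ, fun A hA hconn hdiam => h A hA hconn fun m => ?_⟩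
  have hm : g ^ m = g ^ (m % k) * g ^ (k * (m / k)) := by
    rw [← zpow_add, Int.emod_add_mul_ediv]
  have hsmall : diam (⇑(g ^ (k * (m / k))) '' A) < δ := by
    rw [zpow_mul]
    exact (hdiam _).trans_lt (half_lt_self hδ)
  rw [hm, Equiv.Perm.coe_mul, Set.image_comp]
  exact hFδ _ (hA.image (huc _).continuous).isBounded hsmall
    ⟨m % k, Int.emod_nonneg m hk, Int.emod_lt m hk⟩

end CWExpansive

theorem stmt_2 {X : Type*} [MetricSpace X] [CompactSpace X] (f : X ≃ₜ X) :
    (CWExpansive (f.toEquiv : Equiv.Perm X) ↔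
      ∀ k : ℤ, k ≠ 0 → CWExpansive ((f.toEquiv : Equiv.Perm X) ^ k)) ∧
    (∀ i₀ : ℤ, i₀ ≠ 0 →
      (CWExpansive (f.toEquiv : Equiv.Perm X) ↔
        CWExpansive ((f.toEquiv : Equiv.Perm X) ^ i₀))) := by
  have hzpow : ∀ k : ℤ, k ≠ 0 → CWExpansive (f.toEquiv : Equiv.Perm X) →
      CWExpansive ((f.toEquiv : Equiv.Perm X) ^ k) := fun k hk h =>
    h.zpow (fun n => CompactSpace.uniformContinuous_of_continuous (f.continuous_toEquiv_zpow n)) hk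
  refine ⟨⟨fun h k hk => hzpow k hk h, fun h => ?_⟩, fun i₀ hi₀ => ⟨hzpow i₀ hi₀, .of_zpow⟩⟩
  simpa using h 1 one_ne_zero
end

section
/- Let X be a compact metric space, f : X → X a homeomorphism, and N ≥ 1 a natural number. Then f is cwN-expansive if and only if f^k is cwN-expansive for every nonzero integer k. -/
/-!
For `k > 0` the constant `c` of `f` shrinks to one for `f ^ k`: by uniform continuity of the
finitely many maps `f ^ j`, `0 ≤ j < k`, there is `c'` such that these maps send sets of
diameter `≤ c'` to sets of diameter `≤ c`. Since every forward (backward) `f`-iterate is some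
such `f ^ j` applied after a forward (backward) `f ^ k`-iterate, `c'`-stability under `f ^ k`
gives `c`-stability under `f`. Negative powers follow because swapping `A` and `B` shows that
`f⁻¹` is cwN-expansive with `f`; the converse is the case `k = 1`.
-/

/-- A self-homeomorphism (underlying bijection `g`) is cwN-expansive if there is `c > 0`
such that for all connected compacta `A`, `B` with `diam (gⁿ A) ≤ c` for all `n ≥ 0` and
`diam (gⁿ B) ≤ c` for all `n ≤ 0`, the intersection `A ∩ B` has at most `N` points. -/
def CWNExpansive {X : Type*} [MetricSpace X] (g : Equiv.Perm X) (N : ℕ) : Prop :=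
  ∃ c > (0 : ℝ), ∀ A B : Set X, IsCompact A → IsConnected A → IsCompact B → IsConnected B →
    (∀ n : ℤ, 0 ≤ n → Metric.diam (⇑(g ^ n) '' A) ≤ c) →
    (∀ n : ℤ, n ≤ 0 → Metric.diam (⇑(g ^ n) '' B) ≤ c) →
    (A ∩ B).encard ≤ (N : ℕ∞)

open Metric Set Filter Topology

section UniformContinuity

variable {α β : Type*} [PseudoMetricSpace α] [PseudoMetricSpace β]

theorem UniformContinuous.eventually_diam_image_le {φ : α → β} (hφ : UniformContinuous φ)
    {ε : ℝ} (hε : 0 < ε) :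
    ∀ᶠ δ in 𝓝 0, ∀ S : Set α, Bornology.IsBounded S → diam S ≤ δ → diam (φ '' S) ≤ ε := by
  obtain ⟨δ', hδ', hφδ'⟩ := Metric.uniformContinuous_iff.1 hφ ε hε
  filter_upwards [Iio_mem_nhds hδ'] with δ hδ S hS hSδ
  refine diam_le_of_forall_dist_le hε.le ?_
  rintro _ ⟨x, hx, rfl⟩ _ ⟨y, hy, rfl⟩
  exact (hφδ' ((dist_le_diam_of_mem hS hx hy).trans_lt (hSδ.trans_lt hδ))).le

theorem exists_pos_forall_diam_image_le {ι : Type*} (s : Finset ι) {φ : ι → α → β}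
    (hφ : ∀ i ∈ s, UniformContinuous (φ i)) {ε : ℝ} (hε : 0 < ε) :
    ∃ δ > 0, ∀ i ∈ s, ∀ S : Set α, Bornology.IsBounded S → diam S ≤ δ →
      diam (φ i '' S) ≤ ε :=
  ((eventually_all_finset s).2 fun i hi => (hφ i hi).eventually_diam_image_le hε).exists_gt

end UniformContinuity

theorem Homeomorph.coe_toEquiv_zpow {X : Type*} [TopologicalSpace X] (f : X ≃ₜ X) (j : ℤ) :
    ⇑((f.toEquiv : Equiv.Perm X) ^ j) = ⇑(f ^ j) :=
  let toPerm : (X ≃ₜ X) →* Equiv.Perm X := ⟨⟨Homeomorph.toEquiv, rfl⟩, fun _ _ => rfl⟩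
  congrArg DFunLike.coe (map_zpow toPerm f j).symm

namespace CWNExpansive

variable {X : Type*} [MetricSpace X] {N : ℕ}

theorem inv {g : Equiv.Perm X} (h : CWNExpansive g N) : CWNExpansive g⁻¹ N := by
  obtain ⟨c, hc, H⟩ := h
  refine ⟨c, hc, fun A B hA hA' hB hB' hAs hBs => ?_⟩
  rw [inter_comm]
  refine H B A hB hB' hA hA' (fun n hn => ?_) (fun n hn => ?_)
  · simpa using hBs (-n) (by omega)
  · simpa using hAs (-n) (by omega)

theorem zpow_of_pos [CompactSpace X] {f : X ≃ₜ X}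
    (h : CWNExpansive (f.toEquiv : Equiv.Perm X) N) {k : ℤ} (hk : 0 < k) :
    CWNExpansive ((f.toEquiv : Equiv.Perm X) ^ k) N := by
  set g : Equiv.Perm X := f.toEquiv
  obtain ⟨c, hc, H⟩ := h
  obtain ⟨c', hc', hsmall⟩ :=
    exists_pos_forall_diam_image_le (Finset.Ico 0 k) (φ := fun j => ⇑(g ^ j))
      (fun j _ => by
        simpa only [g, Homeomorph.coe_toEquiv_zpow] using
          CompactSpace.uniformContinuous_of_continuous (f ^ j).continuous) hc
  have hiter : ∀ (m : ℤ) (S : Set X), diam (⇑((g ^ k) ^ (m / k)) '' S) ≤ c' →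
      diam (⇑(g ^ m) '' S) ≤ c := by
    intro m S hS
    have hm : g ^ m = g ^ (m % k) * (g ^ k) ^ (m / k) := by
      rw [← zpow_mul, ← zpow_add, Int.emod_add_mul_ediv]
    rw [hm, Equiv.Perm.coe_mul, image_comp]
    exact hsmall _ (Finset.mem_Ico.2 ⟨Int.emod_nonneg m hk.ne', Int.emod_lt_of_pos m hk⟩) _
      isBounded_of_compactSpace hS
  refine ⟨c', hc', fun A B hA hA' hB hB' hAs hBs => H A B hA hA' hB hB' (fun m hm => ?_)
    (fun m hm => ?_)⟩
  · exact hiter m A (hAs _ (Int.ediv_nonneg hm hk.le))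
  · exact hiter m B (hBs _ (Int.ediv_nonpos_of_nonpos_of_neg hm hk))

end CWNExpansive

theorem stmt_3_general {X : Type*} [MetricSpace X] [CompactSpace X] (f : X ≃ₜ X) (N : ℕ) :
    CWNExpansive (f.toEquiv : Equiv.Perm X) N ↔
      ∀ k : ℤ, k ≠ 0 → CWNExpansive ((f.toEquiv : Equiv.Perm X) ^ k) N := by
  refine ⟨fun h k hk => ?_, fun h => by simpa using h 1 one_ne_zero⟩
  rcases hk.lt_or_gt with hneg | hpos
  · simpa using (h.zpow_of_pos (neg_pos.2 hneg)).inv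
  · exact h.zpow_of_pos hpos

theorem stmt_3 {X : Type*} [MetricSpace X] [CompactSpace X] (f : X ≃ₜ X) (N : ℕ)
    (hN : 1 ≤ N) :
    CWNExpansive (f.toEquiv : Equiv.Perm X) N ↔
      ∀ k : ℤ, k ≠ 0 → CWNExpansive ((f.toEquiv : Equiv.Perm X) ^ k) N :=
  stmt_3_general f N
end

section
/- Let X be a compact metric space, f : X → X a homeomorphism, and N ≥ 1. Then f is N-expansive if and only if f^k is N-expansive for every nonzero integer k. -/
/-!
Write `n = r + k m` with `0 ≤ r < |k|`. A point `y` in a small dynamical ball of `f ^ k` around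
`x` has `(f ^ k) ^ m y` close to `(f ^ k) ^ m x`, and the finitely many maps `f ^ r`, `0 ≤ r < |k|`,
are uniformly equicontinuous on the compact space, so `f ^ n y` stays `α`-close to `f ^ n x`. Hence
small dynamical balls of `f ^ k` lie in the `α`-dynamical balls of `f`, which have at most `N`
points.
-/

/-- The dynamical ball of radius `α` at `x` for the bijection `g` (iterated via `g ^ n`). -/
def dynBall {X : Type*} [MetricSpace X] (g : Equiv.Perm X) (α : ℝ) (x : X) : Set X :=
  {y | ∀ n : ℤ, dist ((g ^ n) x) ((g ^ n) y) ≤ α}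

/-- `g` is N-expansive if some `α > 0` makes every dynamical ball have at most `N` points. -/
def NExpansive {X : Type*} [MetricSpace X] (g : Equiv.Perm X) (N : ℕ) : Prop :=
  ∃ α > (0 : ℝ), ∀ x : X, (dynBall g α x).encard ≤ (N : ℕ∞)

open Equiv

def Homeomorph.toPerm_s4 {X : Type*} [TopologicalSpace X] : (X ≃ₜ X) →* Perm X where
  toFun h := h.toEquiv
  map_one' := rfl
  map_mul' _ _ := rfl

theorem Homeomorph.continuous_toEquiv_zpow_s4 {X : Type*} [TopologicalSpace X] (f : X ≃ₜ X)
    (n : ℤ) : Continuous ⇑(f.toEquiv ^ n) := by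
  change Continuous ⇑(Homeomorph.toPerm_s4 f ^ n)
  rw [← map_zpow]
  exact (f ^ n).continuous

theorem exists_pos_forall_dist_le_of_continuous {X Y ι : Type*} [PseudoMetricSpace X]
    [CompactSpace X] [PseudoMetricSpace Y] [Finite ι] {F : ι → X → Y}
    (hF : ∀ i, Continuous (F i)) {α : ℝ} (hα : 0 < α) :
    ∃ β > 0, ∀ i a b, dist a b ≤ β → dist (F i a) (F i b) ≤ α := by
  have hequi : UniformEquicontinuous F :=
    uniformEquicontinuous_finite.2 fun i => CompactSpace.uniformContinuous_of_continuous (hF i)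
  obtain ⟨δ, hδ, hδF⟩ := Metric.uniformEquicontinuous_iff.1 hequi α hα
  exact ⟨δ / 2, half_pos hδ, fun i a b hab => (hδF a b (by linarith) i).le⟩

theorem dynBall_zpow_subset {X : Type*} [MetricSpace X] {g : Perm X} {k : ℤ} (hk : k ≠ 0)
    {α β : ℝ}
    (h : ∀ r ∈ Finset.Ico 0 |k|, ∀ a b, dist a b ≤ β → dist ((g ^ r) a) ((g ^ r) b) ≤ α)
    (x : X) : dynBall (g ^ k) β x ⊆ dynBall g α x := by
  intro y hy n
  have hn : g ^ n = g ^ (n % k) * (g ^ k) ^ (n / k) := by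
    rw [← zpow_mul, ← zpow_add, Int.emod_add_mul_ediv]
  rw [hn]
  exact h _ (Finset.mem_Ico.2 ⟨Int.emod_nonneg n hk, Int.emod_lt_abs n hk⟩) _ _ (hy _)

theorem stmt_4_general {X : Type*} [MetricSpace X] [CompactSpace X] (f : X ≃ₜ X) (N : ℕ) :
    NExpansive (f.toEquiv : Equiv.Perm X) N ↔
      ∀ k : ℤ, k ≠ 0 → NExpansive ((f.toEquiv : Equiv.Perm X) ^ k) N := by
  refine ⟨fun ⟨α, hα, hball⟩ k hk => ?_, fun h => by simpa using h 1 one_ne_zero⟩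
  obtain ⟨β, hβ, hpow⟩ := exists_pos_forall_dist_le_of_continuous
    (F := fun r : Finset.Ico 0 |k| => ⇑(f.toEquiv ^ (r : ℤ)))
    (fun r => f.continuous_toEquiv_zpow_s4 r) hα
  refine ⟨β, hβ, fun x => (Set.encard_mono ?_).trans (hball x)⟩
  exact dynBall_zpow_subset hk (fun r hr => hpow ⟨r, hr⟩) x

theorem stmt_4 {X : Type*} [MetricSpace X] [CompactSpace X] (f : X ≃ₜ X) (N : ℕ)
    (hN : 1 ≤ N) :
    NExpansive (f.toEquiv : Equiv.Perm X) N ↔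
      ∀ k : ℤ, k ≠ 0 → NExpansive ((f.toEquiv : Equiv.Perm X) ^ k) N :=
  stmt_4_general f N
end
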